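/- Recursive relations for powers of the Green function of the linearized model. Let X be an M×n real matrix and for z in the complex upper half-plane let H(z) = √z [[0, X],[X^T, 0]] (an (M+n)×(M+n) matrix, with √z the principal square root) and G(z) = (H(z) − z I)^{−1}. Then, with ′ denoting differentiation in z, the following identities hold wherever G is defined: G² = 2G′ + G/z, G³ = (G²)′ + G²/z, and G⁴ = (2/3)(G³)′ + G³/z. -/

import Mathlib

/-!
Since `H(z) = √z B` with `B` constant, `H′ = H / (2z)`, so `A = H − z` satisfies
`A′ = A / (2z) − 1/2`. Differentiating `G A = 1` gives `G′ = −G A′ G = G² / 2 − G / (2z)`.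
This is a polynomial in `G`, so it commutes with `G` and `(Gⁿ)′ = n Gⁿ⁻¹ G′`, i.e.
`Gⁿ⁺¹ = (2/n) (Gⁿ)′ + Gⁿ / z`; the three identities are the cases `n = 1, 2, 3`.
-/

open Matrix

noncomputable section

/-- The `√z`-scaled linearization `H(z) = √z [[0, X], [Xᵀ, 0]]` of an `M × n` real matrix,
with `√z` the principal complex square root. -/
def linH {M N : ℕ} (X : Matrix (Fin M) (Fin N) ℝ) (z : ℂ) :
    Matrix (Fin M ⊕ Fin N) (Fin M ⊕ Fin N) ℂ :=
  z ^ ((1 : ℂ) / 2) •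
    Matrix.fromBlocks 0 (X.map (fun t => (t : ℂ))) (X.map (fun t => (t : ℂ)))ᵀ 0

def GreenG {M N : ℕ} (X : Matrix (Fin M) (Fin N) ℝ) (z : ℂ) :
    Matrix (Fin M ⊕ Fin N) (Fin M ⊕ Fin N) ℂ :=
  (linH X z - z • (1 : Matrix (Fin M ⊕ Fin N) (Fin M ⊕ Fin N) ℂ))⁻¹

section NormedAlgebra

variable {𝕜 R : Type*} [NontriviallyNormedField 𝕜] [NormedRing R] [NormedAlgebra 𝕜 R]
  {f : 𝕜 → R} {z : 𝕜}

theorem HasDerivAt.ringInverse [HasSummableGeomSeries R] {f' : R} (hf : HasDerivAt f f' z)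
    (hu : IsUnit (f z)) :
    HasDerivAt (fun w => Ring.inverse (f w))
      (-(Ring.inverse (f z) * f' * Ring.inverse (f z))) z := by
  obtain ⟨u, hu⟩ := hu
  have hinv := hasFDerivAt_ringInverse (𝕜 := 𝕜) u
  rw [hu] at hinv
  rw [← hu, Ring.inverse_unit]
  exact hinv.comp_hasDerivAt z hf

theorem HasDerivAt.ringInverse_of_affine [HasSummableGeomSeries R] {c d : 𝕜}
    (hf : HasDerivAt f (c • f z + d • 1) z) (hu : IsUnit (f z)) :
    HasDerivAt (fun w => Ring.inverse (f w))
      ((-d) • Ring.inverse (f z) ^ 2 + (-c) • Ring.inverse (f z)) z := by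
  refine (hf.ringInverse hu).congr_deriv ?_
  have hinv : Ring.inverse (f z) * f z = 1 := Ring.inverse_mul_cancel _ hu
  rw [mul_add, add_mul, mul_smul_comm, smul_mul_assoc, hinv, mul_smul_comm, mul_one,
    smul_mul_assoc, one_mul, sq]
  module

theorem HasDerivAt.pow_of_riccati {p q : 𝕜} (hf : HasDerivAt f (p • f z ^ 2 + q • f z) z)
    (n : ℕ) :
    HasDerivAt (fun w => f w ^ n) ((n : 𝕜) • (p • f z ^ (n + 1) + q • f z ^ n)) z := by
  induction n with
  | zero => simpa using hasDerivAt_const z (1 : R)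
  | succ n ih =>
    simp_rw [pow_succ _ n]
    refine (ih.fun_mul hf).congr_deriv ?_
    simp only [smul_add, add_mul, mul_add, smul_mul_assoc, mul_smul_comm, ← pow_succ, ← pow_add,
      Nat.cast_succ]
    module

end NormedAlgebra

theorem Complex.hasDerivAt_cpow_half {z : ℂ} (hz : z ∈ Complex.slitPlane) :
    HasDerivAt (fun w : ℂ => w ^ (1 / 2 : ℂ)) ((2 * z)⁻¹ * z ^ (1 / 2 : ℂ)) z := by
  refine (Complex.hasStrictDerivAt_cpow_const hz).hasDerivAt.congr_deriv ?_
  rw [Complex.cpow_sub _ _ (Complex.slitPlane_ne_zero hz), Complex.cpow_one]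
  field_simp

section MatrixDeriv

attribute [local instance] Matrix.linftyOpNormedAddCommGroup Matrix.linftyOpNormedSpace

theorem HasDerivAt.matrix_elem {𝕜 m n : Type*} [NontriviallyNormedField 𝕜] [Fintype m]
    [Fintype n] {f : 𝕜 → Matrix m n 𝕜} {f' : Matrix m n 𝕜} {z : 𝕜} (hf : HasDerivAt f f' z)
    (i : m) (j : n) : HasDerivAt (fun w => f w i j) (f' i j) z :=
  let entry : Matrix m n 𝕜 →L[𝕜] 𝕜 :=
    ⟨Matrix.entryLinearMap 𝕜 𝕜 i j, continuous_id.matrix_elem i j⟩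
  entry.hasFDerivAt.comp_hasDerivAt z hf

end MatrixDeriv

section GreenFunction

-- Any norm on matrices gives the same derivatives; this one makes them a normed algebra.
attribute [local instance] Matrix.linftyOpNormedRing Matrix.linftyOpNormedAlgebra

variable {M N : ℕ} (X : Matrix (Fin M) (Fin N) ℝ) {z : ℂ}

theorem hasDerivAt_linH (hz : z ∈ Complex.slitPlane) :
    HasDerivAt (linH X) ((2 * z)⁻¹ • linH X z) z := by
  rw [linH, smul_smul]
  exact (Complex.hasDerivAt_cpow_half hz).smul_const _

theorem hasDerivAt_linH_sub_smul_one (hz : z ∈ Complex.slitPlane) :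
    HasDerivAt (fun w => linH X w - w • 1)
      ((2 * z)⁻¹ • (linH X z - z • 1) + (-1 / 2 : ℂ) • 1) z := by
  refine ((hasDerivAt_linH X hz).sub ((hasDerivAt_id z).smul_const 1)).congr_deriv ?_
  have hz0 : (2 * z)⁻¹ * z = 1 / 2 := by field_simp [Complex.slitPlane_ne_zero hz]
  rw [smul_sub, smul_smul, hz0]
  module

theorem hasDerivAt_greenG (hz : z ∈ Complex.slitPlane) (hinv : IsUnit (linH X z - z • 1).det) :
    HasDerivAt (GreenG X) ((1 / 2 : ℂ) • GreenG X z ^ 2 + (-(2 * z)⁻¹) • GreenG X z) z := by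
  have hG : GreenG X = fun w => Ring.inverse (linH X w - w • 1) := by
    funext w
    exact Matrix.nonsing_inv_eq_ringInverse _
  rw [hG]
  refine ((hasDerivAt_linH_sub_smul_one X hz).ringInverse_of_affine
    ((Matrix.isUnit_iff_isUnit_det _).mpr hinv)).congr_deriv ?_
  norm_num

theorem greenG_pow_succ_apply (hz : z ∈ Complex.slitPlane)
    (hinv : IsUnit (linH X z - z • 1).det) (n : ℕ) (hn : n ≠ 0) (a b : Fin M ⊕ Fin N) :
    (GreenG X z ^ (n + 1)) a b
      = 2 / n * deriv (fun w => (GreenG X w ^ n) a b) z + (GreenG X z ^ n) a b / z := by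
  rw [(((hasDerivAt_greenG X hz hinv).pow_of_riccati n).matrix_elem a b).deriv]
  simp only [Matrix.smul_apply, Matrix.add_apply, smul_eq_mul]
  field_simp [Complex.slitPlane_ne_zero hz]
  ring

end GreenFunction

theorem green_function_recursions_general
    (M N : ℕ) (X : Matrix (Fin M) (Fin N) ℝ)
    (U : Set ℂ) (hUup : ∀ w ∈ U, 0 < w.im)
    (hUinv : ∀ w ∈ U,
      IsUnit (linH X w - w • (1 : Matrix (Fin M ⊕ Fin N) (Fin M ⊕ Fin N) ℂ)).det)
    (z : ℂ) (hz : z ∈ U) :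
    (∀ a b, (GreenG X z ^ 2) a b
        = 2 * deriv (fun w => GreenG X w a b) z + GreenG X z a b / z) ∧
    (∀ a b, (GreenG X z ^ 3) a b
        = deriv (fun w => (GreenG X w ^ 2) a b) z + (GreenG X z ^ 2) a b / z) ∧
    (∀ a b, (GreenG X z ^ 4) a b
        = 2 / 3 * deriv (fun w => (GreenG X w ^ 3) a b) z + (GreenG X z ^ 3) a b / z) := by
  have recursion := greenG_pow_succ_apply X (Or.inr (hUup z hz).ne') (hUinv z hz)
  refine ⟨fun a b => ?_, fun a b => ?_, fun a b => ?_⟩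
  · simpa using recursion 1 one_ne_zero a b
  · simpa using recursion 2 two_ne_zero a b
  · simpa using recursion 3 three_ne_zero a b

/-- **Recursive relations for powers of the Green function**: wherever `G` is defined
(i.e. on an open subset of the upper half-plane on which `H(z) − z I` is invertible),
`G² = 2G′ + G/z`, `G³ = (G²)′ + G²/z` and `G⁴ = (2/3)(G³)′ + G³/z`, the derivatives being
taken entrywise in `z`. -/
theorem green_function_recursions
    (M N : ℕ) (X : Matrix (Fin M) (Fin N) ℝ)
    (U : Set ℂ) (hUopen : IsOpen U) (hUup : ∀ w ∈ U, 0 < w.im)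
    (hUinv : ∀ w ∈ U,
      IsUnit (linH X w - w • (1 : Matrix (Fin M ⊕ Fin N) (Fin M ⊕ Fin N) ℂ)).det)
    (z : ℂ) (hz : z ∈ U) :
    (∀ a b, (GreenG X z ^ 2) a b
        = 2 * deriv (fun w => GreenG X w a b) z + GreenG X z a b / z) ∧
    (∀ a b, (GreenG X z ^ 3) a b
        = deriv (fun w => (GreenG X w ^ 2) a b) z + (GreenG X z ^ 2) a b / z) ∧
    (∀ a b, (GreenG X z ^ 4) a b
        = 2 / 3 * deriv (fun w => (GreenG X w ^ 3) a b) z + (GreenG X z ^ 3) a b / z) :=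
  green_function_recursions_general M N X U hUup hUinv z hz

end
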